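/- For θ > 0 and k ≥ 1, let V_{1,θ}(h) = (2/(log 2)^{θ+1}) · h · |log h|^{θ+1} and ω_k(h) = h(log(1/h^k) + 1) for small h > 0. Then lim_{h→0} ω_k(h)/V_{1,θ}(h) = 0, yet for every ξ > 1, lim_{h→0} [ω_k(ξh)/V_{1,θ}(ξh)] · [V_{1,θ}(h)/ω_k(h)] = 1; consequently the pair (ω_k, V_{1,θ}) satisfies the limit condition lim_{h→0} ω(h)/V(h) = 0 but fails Assumption A (there are no γ > 0, ξ₀ > 1, η₀ ∈ (0,1) with ω_k(ξh)/V_{1,θ}(ξh) ≥ ξ^γ ω_k(h)/V_{1,θ}(h) for all h ∈ (0,η₀), ξ ∈ (1,ξ₀]). -/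

import Mathlib

/-!
In the variable `t = -log h` the quotient `ω_k(h) / V_{1,θ}(h)` becomes
`(1 + k t) / (c t^(θ+1))`, which tends to `0` as `t → ∞` because `θ > 0`. Replacing `h` by `ξ h`
only shifts `t` by `log ξ`, and a fixed shift of `t` changes `1 + k t` and `t^(θ+1)` only by
factors tending to `1`. Hence `q(ξh) / q(h) → 1` for `q = ω_k / V_{1,θ}`, whereas Assumption A
would force `q(ξ₀ h) / q(h) ≥ ξ₀^γ > 1` for all small `h`.
-/

open Set Filter Topology Real

noncomputable section

/-- `V_{1,θ}(h) = (2/(log 2)^{θ+1}) · h · |log h|^{θ+1}`. -/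
noncomputable def Vonetheta (θ : ℝ) : ℝ → ℝ := fun h =>
  (2 / Real.log 2 ^ (θ + 1)) * h * |Real.log h| ^ (θ + 1)

/-- `ω_k(h) = h (log(1/h^k) + 1)`. -/
noncomputable def omegak (k : ℝ) : ℝ → ℝ := fun h => h * (Real.log (1 / h ^ k) + 1)

def AssumptionA (ω V : ℝ → ℝ) : Prop :=
  ∃ γ > (0:ℝ), ∃ ξ₀ > (1:ℝ), ∃ η₀ ∈ Ioo (0:ℝ) 1,
    ∀ h ∈ Ioo (0:ℝ) η₀, ∀ ξ ∈ Ioc (1:ℝ) ξ₀, ξ ^ γ * (ω h / V h) ≤ ω (ξ * h) / V (ξ * h)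

theorem not_assumptionA_of_tendsto {ω V : ℝ → ℝ} (hpos : ∀ᶠ h in 𝓝[>] 0, 0 < ω h / V h)
    (hlim : ∀ ξ > (1:ℝ),
      Tendsto (fun h => ω (ξ * h) / V (ξ * h) * (V h / ω h)) (𝓝[>] 0) (𝓝 1)) :
    ¬ AssumptionA ω V := by
  rintro ⟨γ, hγ, ξ₀, hξ₀, η₀, ⟨hη₀, -⟩, hA⟩
  have hge : ∀ᶠ h in 𝓝[>] 0, ξ₀ ^ γ ≤ ω (ξ₀ * h) / V (ξ₀ * h) * (V h / ω h) := by
    filter_upwards [hpos, Ioo_mem_nhdsGT hη₀] with h hq hh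
    rw [← inv_div (ω h), ← div_eq_mul_inv, le_div_iff₀ hq]
    exact hA h hh ξ₀ ⟨hξ₀, le_rfl⟩
  have hle : ξ₀ ^ γ ≤ 1 := ge_of_tendsto (hlim ξ₀ hξ₀) hge
  exact hle.not_gt (one_lt_rpow hξ₀ hγ)

theorem tendsto_sub_div_self_of_tendsto_atTop {α : Type*} {l : Filter α} {f : α → ℝ}
    (hf : Tendsto f l atTop) (b : ℝ) : Tendsto (fun x => (f x - b) / f x) l (𝓝 1) := by
  have hlim : Tendsto (fun x => 1 - b * (f x)⁻¹) l (𝓝 (1 - b * 0)) :=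
    tendsto_const_nhds.sub ((tendsto_inv_atTop_zero.comp hf).const_mul b)
  rw [mul_zero, sub_zero] at hlim
  refine hlim.congr' ?_
  filter_upwards [hf.eventually_ne_atTop 0] with x hx
  field_simp

/-- The quotient `ω_k / V_{1,θ}` written in the variable `t = -log h`. -/
def affineDivRpow (c k p t : ℝ) : ℝ := (1 + k * t) / (c * t ^ p)

theorem affineDivRpow_pos {c k p t : ℝ} (hc : 0 < c) (hk : 0 ≤ k) (ht : 0 < t) :
    0 < affineDivRpow c k p t := by
  unfold affineDivRpow
  positivity

theorem tendsto_affineDivRpow_atTop (c k : ℝ) {p : ℝ} (hp : 1 < p) :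
    Tendsto (affineDivRpow c k p) atTop (𝓝 0) := by
  have hlim : Tendsto (fun t : ℝ => c⁻¹ * (t ^ (-p) + k * t ^ (-(p - 1)))) atTop
      (𝓝 (c⁻¹ * (0 + k * 0))) :=
    ((tendsto_rpow_neg_atTop (by linarith)).add
      ((tendsto_rpow_neg_atTop (by linarith)).const_mul k)).const_mul _
  rw [mul_zero, add_zero, mul_zero] at hlim
  refine hlim.congr' ?_
  filter_upwards [eventually_gt_atTop 0] with t ht
  rw [neg_sub, rpow_sub ht, rpow_one, rpow_neg ht.le, affineDivRpow]
  field_simp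

theorem tendsto_affineDivRpow_sub_div {c k : ℝ} (hc : c ≠ 0) (hk : 0 < k) (p a : ℝ) :
    Tendsto (fun t => affineDivRpow c k p (t - a) / affineDivRpow c k p t) atTop (𝓝 1) := by
  have hlin : Tendsto (fun t : ℝ => ((1 + k * t) - k * a) / (1 + k * t)) atTop (𝓝 1) :=
    tendsto_sub_div_self_of_tendsto_atTop
      (tendsto_atTop_add_const_left _ 1 (tendsto_id.const_mul_atTop hk)) _
  have hpow : Tendsto (fun t : ℝ => ((t - a) / t) ^ p) atTop (𝓝 1) := by
    simpa using (tendsto_sub_div_self_of_tendsto_atTop tendsto_id a).rpow_const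
      (Or.inl one_ne_zero)
  have hlim := hlin.div hpow one_ne_zero
  rw [div_one] at hlim
  refine hlim.congr' ?_
  filter_upwards [eventually_gt_atTop (max 0 a)] with t ht
  have ht0 : 0 < t := (le_max_left 0 a).trans_lt ht
  have hta : 0 < t - a := sub_pos.2 ((le_max_right 0 a).trans_lt ht)
  have : 0 < 1 + k * t := by positivity
  rw [Pi.div_apply, div_rpow hta.le ht0.le, affineDivRpow, affineDivRpow]
  field_simp
  ring

theorem omegak_div_Vonetheta {θ k h : ℝ} (hh₀ : 0 < h) (hh₁ : h ≤ 1) :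
    omegak k h / Vonetheta θ h = affineDivRpow (2 / log 2 ^ (θ + 1)) k (θ + 1) (-log h) := by
  rw [omegak, Vonetheta, affineDivRpow, one_div, log_inv, log_rpow hh₀,
    abs_of_nonpos (log_nonpos hh₀.le hh₁), mul_right_comm _ h, mul_comm _ h,
    mul_div_mul_left _ _ hh₀.ne']
  ring_nf

theorem eventually_omegak_div_Vonetheta (θ k : ℝ) : ∀ᶠ h in 𝓝[>] (0:ℝ),
    omegak k h / Vonetheta θ h = affineDivRpow (2 / log 2 ^ (θ + 1)) k (θ + 1) (-log h) :=
  Filter.mem_of_superset (Ioo_mem_nhdsGT one_pos) fun _ hh => omegak_div_Vonetheta hh.1 hh.2.le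

theorem two_div_log_two_rpow_pos (θ : ℝ) : 0 < 2 / log 2 ^ (θ + 1) :=
  div_pos two_pos (rpow_pos_of_pos (log_pos one_lt_two) _)

theorem tendsto_neg_log_nhdsGT_zero : Tendsto (fun h => -log h) (𝓝[>] 0) atTop :=
  tendsto_neg_atBot_atTop.comp tendsto_log_nhdsGT_zero

theorem eventually_omegak_div_Vonetheta_pos (θ : ℝ) {k : ℝ} (hk : 0 ≤ k) :
    ∀ᶠ h in 𝓝[>] (0:ℝ), 0 < omegak k h / Vonetheta θ h := by
  filter_upwards [Ioo_mem_nhdsGT one_pos, eventually_omegak_div_Vonetheta θ k] with h hh hq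
  exact hq ▸ affineDivRpow_pos (two_div_log_two_rpow_pos θ) hk (neg_pos.2 (log_neg hh.1 hh.2))

theorem tendsto_omegak_div_Vonetheta_zero {θ : ℝ} (hθ : 0 < θ) (k : ℝ) :
    Tendsto (fun h => omegak k h / Vonetheta θ h) (𝓝[>] 0) (𝓝 0) :=
  ((tendsto_affineDivRpow_atTop _ k (by linarith)).comp tendsto_neg_log_nhdsGT_zero).congr'
    ((eventually_omegak_div_Vonetheta θ k).mono fun _ h => h.symm)

theorem tendsto_omegak_div_Vonetheta_scale (θ : ℝ) {k ξ : ℝ} (hk : 0 < k) (hξ : 0 < ξ) :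
    Tendsto (fun h => omegak k (ξ * h) / Vonetheta θ (ξ * h) * (Vonetheta θ h / omegak k h))
      (𝓝[>] 0) (𝓝 1) := by
  have hratio := eventually_omegak_div_Vonetheta θ k
  refine ((tendsto_affineDivRpow_sub_div (two_div_log_two_rpow_pos θ).ne' hk (θ + 1)
    (log ξ)).comp tendsto_neg_log_nhdsGT_zero).congr' ?_
  filter_upwards [self_mem_nhdsWithin, hratio, eventually_nhdsGT_zero_mul_left hξ hratio]
    with h hh hq hqξ
  rw [← inv_div (omegak k h), ← div_eq_mul_inv, hq, hqξ, mul_comm ξ h,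
    log_mul (ne_of_gt hh) hξ.ne', neg_add', Function.comp_apply]

theorem limit_zero_but_assumptionA_fails (θ k : ℝ) (hθ : 0 < θ) (hk : 1 ≤ k) :
    Tendsto (fun h => omegak k h / Vonetheta θ h) (𝓝[>] 0) (𝓝 0) ∧
    (∀ ξ > (1:ℝ), Tendsto
      (fun h => omegak k (ξ * h) / Vonetheta θ (ξ * h) * (Vonetheta θ h / omegak k h))
      (𝓝[>] 0) (𝓝 1)) ∧
    ¬ ∃ γ > (0:ℝ), ∃ ξ₀ > (1:ℝ), ∃ η₀ ∈ Ioo (0:ℝ) 1,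
        ∀ h ∈ Ioo (0:ℝ) η₀, ∀ ξ ∈ Ioc (1:ℝ) ξ₀,
          ξ ^ γ * (omegak k h / Vonetheta θ h) ≤ omegak k (ξ * h) / Vonetheta θ (ξ * h) := by
  have hscale : ∀ ξ > (1:ℝ), Tendsto
      (fun h => omegak k (ξ * h) / Vonetheta θ (ξ * h) * (Vonetheta θ h / omegak k h))
      (𝓝[>] 0) (𝓝 1) :=
    fun ξ hξ => tendsto_omegak_div_Vonetheta_scale θ (by linarith) (by linarith)
  exact ⟨tendsto_omegak_div_Vonetheta_zero hθ k, hscale,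
    not_assumptionA_of_tendsto (eventually_omegak_div_Vonetheta_pos θ (by linarith)) hscale⟩

end
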